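/- The function f(x) = 2e^{2x} + 4e^{-2x} on the interval [0, log(2)/2] attains its maximum value 6 precisely at the endpoints: f(0) = 6 and f(log 2 / 2) = 2·2 + 4/2 = 6, and f(x) < 6 for all x in the open interval (0, log(2)/2). -/
import Mathlib


/-- The function `f(x) = 2e^{2x} + 4e^{-2x}` on `[0, log 2 / 2]` satisfies
`f(0) = 6`, `f(log 2 / 2) = 6`, and `f(x) < 6` on the open interval. -/
theorem stmt2 (f : ℝ → ℝ)
    (hf : ∀ x, f x = 2 * Real.exp (2 * x) + 4 * Real.exp (-(2 * x))) :
    f 0 = 6 ∧ f (Real.log 2 / 2) = 6 ∧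
    ∀ x ∈ Set.Ioo 0 (Real.log 2 / 2), f x < 6 := by
  refine ⟨?_, ?_, ?_⟩
  · simp [hf]
    norm_num
  · rw [hf]
    have h2 : 2 * (Real.log 2 / 2) = Real.log 2 := by ring
    rw [h2, Real.exp_log (by norm_num), Real.exp_neg, Real.exp_log (by norm_num)]
    norm_num
  · rintro x ⟨hx0, hx1⟩
    rw [hf]
    set t := Real.exp (2 * x) with ht
    have htpos : 0 < t := Real.exp_pos _
    have h1 : 1 < t := by
      rw [ht]
      calc (1:ℝ) = Real.exp 0 := by simp
      _ < Real.exp (2 * x) := Real.exp_lt_exp.mpr (by linarith)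
    have h2 : t < 2 := by
      rw [ht]
      have : 2 * x < Real.log 2 := by linarith
      calc Real.exp (2 * x) < Real.exp (Real.log 2) := Real.exp_lt_exp.mpr this
      _ = 2 := Real.exp_log (by norm_num)
    have hinv : Real.exp (-(2 * x)) = 1 / t := by
      rw [Real.exp_neg, ht, one_div]
    rw [hinv]
    rw [div_eq_mul_inv]
    have key : (t - 1) * (t - 2) < 0 := mul_neg_of_pos_of_neg (by linarith) (by linarith)
    have hti : t * t⁻¹ = 1 := mul_inv_cancel₀ (ne_of_gt htpos)
    nlinarith [mul_pos htpos (inv_pos.mpr htpos)]
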